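/- arXiv:0907.0750 — 6 statements merged into one kernel-verified Lean document; each statement's English description precedes it below -/
import Mathlib

section
/- Let ψ be a unit speed curve in ℝ³ with Frenet frame (T, N, B) satisfying, in the parameter θ = ∫κ ds, the equations T' = N, N' = -T + fB, B' = -fN, where f = τ/κ with f' nowhere zero. Then the principal normal N satisfies the third-order vector ODE: (1/f)·d/dθ[ (1/f')·( N'' + (1+f²)N ) ] + N = 0. -/
open Real

/-! Differentiating `N' = -T + f B` with the other two Frenet equations gives
`N'' = -(1 + f²) N + f' B`, so `(1/f') (N'' + (1 + f²) N)` is exactly the binormal `B`;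
then `B' = -f N` is the claimed equation. -/

section Frenet

variable {E : Type*} [NormedAddCommGroup E] [NormedSpace ℝ E]
  {T N B : ℝ → E} {f : ℝ → ℝ}

theorem hasDerivAt_deriv_of_frenet (hN : ∀ θ, HasDerivAt N (-T θ + f θ • B θ) θ) {x : ℝ}
    (hT : HasDerivAt T (N x) x) (hB : HasDerivAt B (-(f x) • N x) x)
    (hf : DifferentiableAt ℝ f x) :
    HasDerivAt (deriv N) (-N x + (f x • (-(f x) • N x) + deriv f x • B x)) x := by
  rw [show deriv N = fun θ => -T θ + f θ • B θ from funext fun θ => (hN θ).deriv]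
  exact hT.neg.add (hf.hasDerivAt.smul hB)

theorem deriv_deriv_add_eq_smul_of_frenet (hN : ∀ θ, HasDerivAt N (-T θ + f θ • B θ) θ)
    {x : ℝ} (hT : HasDerivAt T (N x) x) (hB : HasDerivAt B (-(f x) • N x) x)
    (hf : DifferentiableAt ℝ f x) :
    deriv (deriv N) x + (1 + f x ^ 2) • N x = deriv f x • B x := by
  rw [(hasDerivAt_deriv_of_frenet hN hT hB hf).deriv, smul_smul, add_smul, pow_two]
  module

theorem binormal_eq_of_frenet (hT : ∀ θ, HasDerivAt T (N θ) θ)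
    (hN : ∀ θ, HasDerivAt N (-T θ + f θ • B θ) θ) (hB : ∀ θ, HasDerivAt B (-(f θ) • N θ) θ)
    (hf' : ∀ θ, deriv f θ ≠ 0) :
    (fun x => (deriv f x)⁻¹ • (deriv (deriv N) x + (1 + f x ^ 2) • N x)) = B := by
  funext x
  have hf : DifferentiableAt ℝ f x := differentiableAt_of_deriv_ne_zero (hf' x)
  rw [deriv_deriv_add_eq_smul_of_frenet hN (hT x) (hB x) hf, inv_smul_smul₀ (hf' x)]

end Frenet

theorem normal_third_order_ode_general
    (T N B : ℝ → EuclideanSpace ℝ (Fin 3)) (f : ℝ → ℝ)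
    (hT : ∀ θ, HasDerivAt T (N θ) θ)
    (hN : ∀ θ, HasDerivAt N (-T θ + f θ • B θ) θ)
    (hB : ∀ θ, HasDerivAt B (-(f θ) • N θ) θ)
    (hf0 : ∀ θ, f θ ≠ 0)
    (hf' : ∀ θ, deriv f θ ≠ 0) :
    ∀ θ, (f θ)⁻¹ •
        deriv (fun x => (deriv f x)⁻¹ • (deriv (deriv N) x + (1 + f x ^ 2) • N x)) θ
      + N θ = 0 := by
  intro θ
  rw [binormal_eq_of_frenet hT hN hB hf', (hB θ).deriv, smul_smul, mul_neg,
    inv_mul_cancel₀ (hf0 θ), neg_smul, one_smul, neg_add_cancel]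

/-- With the modified Frenet equations T' = N, N' = -T + f B, B' = -f N
in the parameter θ = ∫κ ds, where f = τ/κ with f' nowhere zero (and f nowhere zero),
the principal normal satisfies the third order vector ODE
(1/f) • d/dθ [ (1/f') • ( N'' + (1+f²) N ) ] + N = 0. -/
theorem normal_third_order_ode
    (T N B : ℝ → EuclideanSpace ℝ (Fin 3)) (f : ℝ → ℝ)
    (hT : ∀ θ, HasDerivAt T (N θ) θ)
    (hN : ∀ θ, HasDerivAt N (-T θ + f θ • B θ) θ)
    (hB : ∀ θ, HasDerivAt B (-(f θ) • N θ) θ)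
    (hN3 : ContDiff ℝ 3 N)
    (hf : ContDiff ℝ 2 f)
    (hf0 : ∀ θ, f θ ≠ 0)
    (hf' : ∀ θ, deriv f θ ≠ 0) :
    ∀ θ, (f θ)⁻¹ •
        deriv (fun x => (deriv f x)⁻¹ • (deriv (deriv N) x + (1 + f x ^ 2) • N x)) θ
      + N θ = 0 :=
  normal_third_order_ode_general T N B f hT hN hB hf0 hf'
end

section
/- Let ψ be a unit speed curve in ℝ³ with κ > 0, and suppose its principal normal N makes a constant angle φ = arccos(n) (with 0 < |n| < 1) with a fixed unit vector d, i.e. ⟨N(s), d⟩ = n for all s. Then the ratio f = τ/κ, viewed as a function of θ = ∫κ ds (with a suitable choice of origin for θ), satisfies f(θ) = ± mθ/√(1 - m²θ²), where m = n/√(1-n²); equivalently τ(s) = ± m κ(s)·(∫κ ds)/√(1 - m²(∫κ ds)²). -/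
/-!
Differentiating `⟪N, d⟫ = n` with the Frenet equations gives `κ ⟪T, d⟫ = τ ⟪B, d⟫`, and
`⟪T, d⟫' = n κ` integrates to `⟪T, d⟫ = n θ`. As `(T, N, B)` is orthonormal,
`⟪B, d⟫² = 1 - n² - n² θ² = (1 - n²)(1 - m² θ²)`. Moreover `⟪B, d⟫` never vanishes (otherwise
`⟪T, d⟫` would vanish too, forcing `n² = 1`), so by continuity it has a constant sign `ε`, and
solving `κ ⟪T, d⟫ = τ ⟪B, d⟫` for `τ` gives the formula.
-/

open Real
open scoped RealInnerProductSpace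

theorem Orthonormal.sum_sq_inner_eq_norm_sq {ι E : Type*} [Fintype ι] [NormedAddCommGroup E]
    [InnerProductSpace ℝ E] [FiniteDimensional ℝ E] {v : ι → E} (hv : Orthonormal ℝ v)
    (hcard : Fintype.card ι = Module.finrank ℝ E) (x : E) :
    ∑ i, ⟪v i, x⟫ ^ 2 = ‖x‖ ^ 2 := by
  simpa using (OrthonormalBasis.mk hv
    (hv.linearIndependent.span_eq_top_of_card_eq_finrank' hcard).ge).sum_sq_inner_right x

theorem sq_inner_add_sq_inner_add_sq_inner_eq_norm_sq {E : Type*} [NormedAddCommGroup E]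
    [InnerProductSpace ℝ E] [FiniteDimensional ℝ E] (hE : Module.finrank ℝ E = 3) {T N B : E}
    (hTn : ‖T‖ = 1) (hNn : ‖N‖ = 1) (hBn : ‖B‖ = 1)
    (hTN : ⟪T, N⟫ = 0) (hTB : ⟪T, B⟫ = 0) (hNB : ⟪N, B⟫ = 0) (x : E) :
    ⟪T, x⟫ ^ 2 + ⟪N, x⟫ ^ 2 + ⟪B, x⟫ ^ 2 = ‖x‖ ^ 2 := by
  have hframe : Orthonormal ℝ ![T, N, B] := by
    simp [orthonormal_vecCons_iff, Fin.forall_fin_succ, hTn, hNn, hBn, hTN, hTB, hNB]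
  simpa [Fin.sum_univ_three, add_assoc] using hframe.sum_sq_inner_eq_norm_sq (by simp [hE]) x

theorem exists_sign_mul_abs_of_continuous_of_ne_zero {X : Type*} [TopologicalSpace X]
    [PreconnectedSpace X] {f : X → ℝ} (hf : Continuous f) (hf0 : ∀ x, f x ≠ 0) :
    ∃ ε : ℝ, (ε = 1 ∨ ε = -1) ∧ ∀ x, f x = ε * |f x| := by
  rcases isPreconnected_univ.eq_or_eq_neg_of_sq_eq hf.continuousOn hf.abs.continuousOn
    (fun x _ => by simp) (fun {x} _ => abs_ne_zero.mpr (hf0 x)) with h | h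
  · exact ⟨1, Or.inl rfl, fun x => by simpa using h (Set.mem_univ x)⟩
  · exact ⟨-1, Or.inr rfl, fun x => by simpa using h (Set.mem_univ x)⟩

theorem hasDerivAt_inner_const {E : Type*} [NormedAddCommGroup E] [InnerProductSpace ℝ E] {F : ℝ → E} {F' : E} {s : ℝ} (hF : HasDerivAt F F' s) (d : E) :
    HasDerivAt (fun u => ⟪F u, d⟫) ⟪F', d⟫ s := by
  simpa using hF.inner ℝ (hasDerivAt_const s d)

theorem curvature_mul_inner_eq_torsion_mul_inner {E : Type*} [NormedAddCommGroup E]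
    [InnerProductSpace ℝ E] {T N B : ℝ → E} {κ τ : ℝ → ℝ} {d : E} {n s : ℝ}
    (hN : HasDerivAt N (-(κ s) • T s + τ s • B s) s) (hangle : ∀ u, ⟪N u, d⟫ = n) :
    κ s * ⟪T s, d⟫ = τ s * ⟪B s, d⟫ := by
  have h := (hasDerivAt_inner_const hN d).unique
    (by simpa only [hangle] using hasDerivAt_const s n)
  simp only [inner_add_left, real_inner_smul_left] at h
  linarith

theorem eq_mul_integral_add_of_hasDerivAt {f κ : ℝ → ℝ} {n : ℝ} (hn : n ≠ 0)
    (hf : ∀ s, HasDerivAt f (n * κ s) s) (hκ : Continuous κ) (s : ℝ) :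
    f s = n * ((∫ u in (0:ℝ)..s, κ u) + f 0 / n) := by
  have hftc := intervalIntegral.integral_eq_sub_of_hasDerivAt (fun u _ => hf u)
    ((continuous_const.mul hκ).intervalIntegrable 0 s)
  rw [intervalIntegral.integral_const_mul] at hftc
  rw [mul_add, mul_div_cancel₀ _ hn]
  linarith

theorem abs_eq_sqrt_mul_sqrt_of_sq_add_sq {a b n m θ : ℝ} (ha : a = n * θ)
    (hpyth : a ^ 2 + n ^ 2 + b ^ 2 = 1) (hn : n ^ 2 < 1) (hm : m = n / √(1 - n ^ 2)) :
    |b| = √(1 - n ^ 2) * √(1 - m ^ 2 * θ ^ 2) := by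
  have hm2 : m ^ 2 * (1 - n ^ 2) = n ^ 2 := by
    rw [hm, div_pow, sq_sqrt (by linarith)]
    field_simp [show 1 - n ^ 2 ≠ 0 by linarith]
  rw [← sqrt_mul (by linarith), ← sqrt_sq_eq_abs]
  congr 1
  linear_combination hpyth + θ ^ 2 * hm2 - (a + n * θ) * ha

theorem torsion_eq_of_frame_coordinates {κ τ a b n m θ ε : ℝ} (hrel : κ * a = τ * b)
    (ha : a = n * θ) (hb : b = ε * |b|) (hε : ε = 1 ∨ ε = -1) (hpyth : a ^ 2 + n ^ 2 + b ^ 2 = 1)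
    (hb0 : b ≠ 0) (hn : n ^ 2 < 1) (hm : m = n / √(1 - n ^ 2)) :
    τ = ε * (m * κ * θ) / √(1 - m ^ 2 * θ ^ 2) := by
  have habs := abs_eq_sqrt_mul_sqrt_of_sq_add_sq ha hpyth hn hm
  have hroot : 0 < √(1 - n ^ 2) := sqrt_pos.mpr (by linarith)
  have hroot' : √(1 - m ^ 2 * θ ^ 2) ≠ 0 := by
    intro h; rw [h, mul_zero, abs_eq_zero] at habs; exact hb0 habs
  have hn_eq : n = m * √(1 - n ^ 2) := by rw [hm, div_mul_cancel₀ _ hroot.ne']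
  have hεε : ε * ε = 1 := by rcases hε with rfl | rfl <;> norm_num
  have hcancel : κ * (m * θ) = τ * (ε * √(1 - m ^ 2 * θ ^ 2)) :=
    mul_left_cancel₀ hroot.ne' (by
      linear_combination hrel - κ * ha + τ * hb + τ * ε * habs - κ * θ * hn_eq)
  rw [eq_div_iff hroot']
  linear_combination (-ε) * hcancel - τ * √(1 - m ^ 2 * θ ^ 2) * hεε

theorem slant_helix_intrinsic_equation_general
    (T N B : ℝ → EuclideanSpace ℝ (Fin 3)) (κ τ : ℝ → ℝ) (d : EuclideanSpace ℝ (Fin 3))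
    (n m : ℝ)
    (hκpos : ∀ s, 0 < κ s)
    (hT : ∀ s, HasDerivAt T (κ s • N s) s)
    (hN : ∀ s, HasDerivAt N (-(κ s) • T s + τ s • B s) s)
    (hB : ∀ s, HasDerivAt B (-(τ s) • N s) s)
    (hTn : ∀ s, ‖T s‖ = 1) (hNn : ∀ s, ‖N s‖ = 1) (hBn : ∀ s, ‖B s‖ = 1)
    (hTN : ∀ s, ⟪T s, N s⟫ = 0) (hTB : ∀ s, ⟪T s, B s⟫ = 0)
    (hNB : ∀ s, ⟪N s, B s⟫ = 0)
    (hd : ‖d‖ = 1)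
    (hn0 : 0 < |n|) (hn1 : |n| < 1)
    (hangle : ∀ s, ⟪N s, d⟫ = n)
    (hκc : Continuous κ)
    (hm : m = n / Real.sqrt (1 - n ^ 2)) :
    ∃ ε : ℝ, (ε = 1 ∨ ε = -1) ∧ ∃ c : ℝ, ∀ s,
      τ s = ε * (m * κ s * ((∫ u in (0:ℝ)..s, κ u) + c)) /
        Real.sqrt (1 - m ^ 2 * ((∫ u in (0:ℝ)..s, κ u) + c) ^ 2) := by
  have hn : n ^ 2 < 1 := by rw [← sq_abs]; nlinarith [abs_nonneg n]
  set a : ℝ → ℝ := fun s => ⟪T s, d⟫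
  set b : ℝ → ℝ := fun s => ⟪B s, d⟫
  have hpyth : ∀ s, a s ^ 2 + n ^ 2 + b s ^ 2 = 1 := fun s => by
    simpa [hangle, hd] using sq_inner_add_sq_inner_add_sq_inner_eq_norm_sq
      finrank_euclideanSpace_fin (hTn s) (hNn s) (hBn s) (hTN s) (hTB s) (hNB s) d
  have hrel : ∀ s, κ s * a s = τ s * b s := fun s =>
    curvature_mul_inner_eq_torsion_mul_inner (hN s) hangle
  have hb0 : ∀ s, b s ≠ 0 := fun s hbs => by
    have has : a s = 0 := by simpa [hbs, (hκpos s).ne'] using hrel s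
    have := hpyth s
    simp only [has, hbs] at this
    linarith
  obtain ⟨ε, hε, hbε⟩ := exists_sign_mul_abs_of_continuous_of_ne_zero
    (continuous_iff_continuousAt.mpr fun s => (hasDerivAt_inner_const (hB s) d).continuousAt) hb0
  refine ⟨ε, hε, a 0 / n, fun s => torsion_eq_of_frame_coordinates (hrel s) ?_ (hbε s) hε
    (hpyth s) (hb0 s) hn hm⟩
  refine eq_mul_integral_add_of_hasDerivAt (abs_pos.mp hn0) (fun u => ?_) hκc s
  simpa [a, real_inner_smul_left, hangle, mul_comm] using hasDerivAt_inner_const (hT u) d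

/-- If ψ is a unit speed curve with κ > 0 whose principal normal makes a
constant angle arccos n (0 < |n| < 1) with a fixed unit vector d, then with
m = n/√(1-n²) and θ(s) = ∫κ ds (up to a suitable shift of origin c and a sign ε),
τ(s) = ε · m κ(s) θ(s) / √(1 - m² θ(s)²). -/
theorem slant_helix_intrinsic_equation
    (ψ T N B : ℝ → EuclideanSpace ℝ (Fin 3)) (κ τ : ℝ → ℝ) (d : EuclideanSpace ℝ (Fin 3))
    (n m : ℝ)
    (hκpos : ∀ s, 0 < κ s)
    (hψ : ∀ s, HasDerivAt ψ (T s) s)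
    (hT : ∀ s, HasDerivAt T (κ s • N s) s)
    (hN : ∀ s, HasDerivAt N (-(κ s) • T s + τ s • B s) s)
    (hB : ∀ s, HasDerivAt B (-(τ s) • N s) s)
    (hTn : ∀ s, ‖T s‖ = 1) (hNn : ∀ s, ‖N s‖ = 1) (hBn : ∀ s, ‖B s‖ = 1)
    (hTN : ∀ s, ⟪T s, N s⟫ = 0) (hTB : ∀ s, ⟪T s, B s⟫ = 0)
    (hNB : ∀ s, ⟪N s, B s⟫ = 0)
    (hd : ‖d‖ = 1)
    (hn0 : 0 < |n|) (hn1 : |n| < 1)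
    (hangle : ∀ s, ⟪N s, d⟫ = n)
    (hκc : Continuous κ) (hτc : Continuous τ)
    (hnothelix : ∀ s, deriv (fun u => τ u / κ u) s ≠ 0)
    (hm : m = n / Real.sqrt (1 - n ^ 2)) :
    ∃ ε : ℝ, (ε = 1 ∨ ε = -1) ∧ ∃ c : ℝ, ∀ s,
      τ s = ε * (m * κ s * ((∫ u in (0:ℝ)..s, κ u) + c)) /
        Real.sqrt (1 - m ^ 2 * ((∫ u in (0:ℝ)..s, κ u) + c) ^ 2) :=
  slant_helix_intrinsic_equation_general T N B κ τ d n m hκpos hT hN hB hTn hNn hBn hTN hTB hNB hd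
    hn0 hn1 hangle hκc hm
end

section
/- Let ψ be a unit speed curve in ℝ³ with κ > 0, θ = ∫κ ds, m ≠ 0, n = m/√(1+m²), and suppose τ(s) = m κ(s)·θ(s)/√(1 - m²θ(s)²) on an interval where |mθ| < 1. Then the vector d = n·(θ T + N + (1/m)·√(1 - m²θ²)·B) is constant along the curve, and ⟨N, d⟩ = n, so ψ is a slant helix. -/
open Real
open scoped RealInnerProductSpace

/-!
With `θ' = κ`, `r = √(1 - m²θ²)` and `r' = -m²θκ/r`, the Frenet equations give
`(θ T + N + (r/m) B)' = (θκ - rτ/m) N + (τ + r'/m) B`, and both coefficients vanish exactly for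
`τ = mκθ/r`. Pairing with `N` gives `1`, once the frame is known to be orthogonal: unit length
forces `κ ⟪T, N⟫ = 0` and `τ ⟪B, N⟫ = 0`; here `τ` vanishes only where `θ` does, i.e. at `s = 0`,
and continuity fills in that point.
-/

theorem Continuous.eq_of_forall_ne {X Y : Type*} [TopologicalSpace X] [TopologicalSpace Y]
    [T2Space Y] {f g : X → Y} {a : X} [(nhdsWithin a {a}ᶜ).NeBot] (hf : Continuous f)
    (hg : Continuous g) (h : ∀ x, x ≠ a → f x = g x) : f = g :=
  hf.ext_on (dense_compl_singleton a) hg h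

theorem intervalIntegral_ne_zero_of_pos {f : ℝ → ℝ} (hf : Continuous f) (hpos : ∀ x, 0 < f x)
    {a b : ℝ} (hab : a ≠ b) : ∫ x in a..b, f x ≠ 0 := by
  rcases hab.lt_or_gt with hab | hba
  · exact (intervalIntegral.intervalIntegral_pos_of_pos (hf.intervalIntegrable _ _) hpos hab).ne'
  · rw [intervalIntegral.integral_symm, neg_ne_zero]
    exact (intervalIntegral.intervalIntegral_pos_of_pos (hf.intervalIntegrable _ _) hpos hba).ne'

theorem hasDerivAt_sqrt_one_sub_sq {θ : ℝ → ℝ} {θ' m s : ℝ} (hθ : HasDerivAt θ θ' s)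
    (hpos : 0 < 1 - m ^ 2 * θ s ^ 2) :
    HasDerivAt (fun t => √(1 - m ^ 2 * θ t ^ 2)) (-(m ^ 2 * θ s * θ') / √(1 - m ^ 2 * θ s ^ 2))
      s := by
  refine ((((hθ.fun_pow 2).const_mul (m ^ 2)).const_sub 1).sqrt hpos.ne').congr_deriv ?_
  field_simp
  ring

section Frenet

variable {F : Type*} [NormedAddCommGroup F] [InnerProductSpace ℝ F]

theorem inner_eq_zero_of_norm_eq_of_hasDerivAt {u : ℝ → F} {u' : F} {c s : ℝ}
    (hu : ∀ t, ‖u t‖ = c) (hd : HasDerivAt u u' s) : ⟪u s, u'⟫ = 0 := by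
  have hconst : HasDerivAt (‖u ·‖ ^ 2) 0 s := by
    simpa only [hu] using hasDerivAt_const s (c ^ 2)
  have := hd.norm_sq.unique hconst
  linarith

theorem inner_eq_zero_of_norm_eq_of_hasDerivAt_smul {u : ℝ → F} {v : F} {a c s : ℝ}
    (hu : ∀ t, ‖u t‖ = c) (hd : HasDerivAt u (a • v) s) (ha : a ≠ 0) : ⟪u s, v⟫ = 0 := by
  have := inner_eq_zero_of_norm_eq_of_hasDerivAt hu hd
  rw [real_inner_smul_right] at this
  exact (mul_eq_zero.1 this).resolve_left ha

variable {T N B : ℝ → F} {κ τ : ℝ → ℝ}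

theorem inner_normal_binormal_eq_zero (hN : ∀ s, HasDerivAt N (-(κ s) • T s + τ s • B s) s)
    (hB : ∀ s, HasDerivAt B (-(τ s) • N s) s) (hBn : ∀ s, ‖B s‖ = 1) {a : ℝ}
    (hτ : ∀ s, s ≠ a → τ s ≠ 0) (s : ℝ) : ⟪N s, B s⟫ = 0 := by
  have hcont : Continuous fun t => ⟪N t, B t⟫ :=
    continuous_iff_continuousAt.2 fun t =>
      ((hN t).differentiableAt.inner ℝ (hB t).differentiableAt).continuousAt
  refine congrFun (hcont.eq_of_forall_ne (a := a) continuous_const fun t ht => ?_) s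
  rw [real_inner_comm]
  exact inner_eq_zero_of_norm_eq_of_hasDerivAt_smul hBn (hB t) (neg_ne_zero.2 (hτ t ht))

theorem hasDerivAt_smul_add_add_smul_frenet {a b : ℝ → ℝ} {a' b' s : ℝ}
    (ha : HasDerivAt a a' s) (hb : HasDerivAt b b' s) (hT : HasDerivAt T (κ s • N s) s)
    (hN : HasDerivAt N (-(κ s) • T s + τ s • B s) s) (hB : HasDerivAt B (-(τ s) • N s) s) :
    HasDerivAt (fun t => a t • T t + N t + b t • B t)
      ((a' - κ s) • T s + (a s * κ s - b s * τ s) • N s + (τ s + b') • B s) s := by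
  refine ((ha.smul hT).add hN).add (hb.smul hB) |>.congr_deriv ?_
  match_scalars <;> ring

theorem hasDerivAt_slant_helix_axis {θ : ℝ → ℝ} {m : ℝ} (hT : ∀ s, HasDerivAt T (κ s • N s) s)
    (hN : ∀ s, HasDerivAt N (-(κ s) • T s + τ s • B s) s)
    (hB : ∀ s, HasDerivAt B (-(τ s) • N s) s) (hθ : ∀ s, HasDerivAt θ (κ s) s) (hm : m ≠ 0)
    (hpos : ∀ s, 0 < 1 - m ^ 2 * θ s ^ 2)
    (hτ : ∀ s, τ s = m * κ s * θ s / √(1 - m ^ 2 * θ s ^ 2)) (s : ℝ) :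
    HasDerivAt (fun t => θ t • T t + N t + (m⁻¹ * √(1 - m ^ 2 * θ t ^ 2)) • B t) 0 s := by
  have hr := (hasDerivAt_sqrt_one_sub_sq (hθ s) (hpos s)).const_mul m⁻¹
  refine (hasDerivAt_smul_add_add_smul_frenet (hθ s) hr (hT s) (hN s) (hB s)).congr_deriv ?_
  have hr0 : √(1 - m ^ 2 * θ s ^ 2) ≠ 0 := (Real.sqrt_pos.2 (hpos s)).ne'
  rw [hτ s]
  generalize √(1 - m ^ 2 * θ s ^ 2) = r at hr0 ⊢
  match_scalars <;> field_simp <;> ring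

end Frenet

theorem slant_helix_converse_general
    (T N B : ℝ → EuclideanSpace ℝ (Fin 3)) (κ τ : ℝ → ℝ) (n m : ℝ)
    (hκpos : ∀ s, 0 < κ s) (hκc : Continuous κ)
    (hT : ∀ s, HasDerivAt T (κ s • N s) s)
    (hN : ∀ s, HasDerivAt N (-(κ s) • T s + τ s • B s) s)
    (hB : ∀ s, HasDerivAt B (-(τ s) • N s) s)
    (hTn : ∀ s, ‖T s‖ = 1) (hNn : ∀ s, ‖N s‖ = 1) (hBn : ∀ s, ‖B s‖ = 1)
    (hm : m ≠ 0)
    (hsmall : ∀ s, |m * (∫ u in (0:ℝ)..s, κ u)| < 1)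
    (hτ : ∀ s, τ s = m * κ s * (∫ u in (0:ℝ)..s, κ u) /
        Real.sqrt (1 - m ^ 2 * (∫ u in (0:ℝ)..s, κ u) ^ 2)) :
    (∀ s₁ s₂,
      n • ((∫ u in (0:ℝ)..s₁, κ u) • T s₁ + N s₁ +
          (m⁻¹ * Real.sqrt (1 - m ^ 2 * (∫ u in (0:ℝ)..s₁, κ u) ^ 2)) • B s₁)
      =
      n • ((∫ u in (0:ℝ)..s₂, κ u) • T s₂ + N s₂ +
          (m⁻¹ * Real.sqrt (1 - m ^ 2 * (∫ u in (0:ℝ)..s₂, κ u) ^ 2)) • B s₂)) ∧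
    (∀ s, ⟪N s,
      n • ((∫ u in (0:ℝ)..s, κ u) • T s + N s +
          (m⁻¹ * Real.sqrt (1 - m ^ 2 * (∫ u in (0:ℝ)..s, κ u) ^ 2)) • B s)⟫ = n) := by
  set θ : ℝ → ℝ := fun s => ∫ u in (0:ℝ)..s, κ u
  have hθ : ∀ s, HasDerivAt θ (κ s) s := fun s => (hκc.integral_hasStrictDerivAt 0 s).hasDerivAt
  have hpos : ∀ s, 0 < 1 - m ^ 2 * θ s ^ 2 := fun s => by
    have := (sq_lt_one_iff_abs_lt_one _).2 (hsmall s)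
    linarith [mul_pow m (θ s) 2]
  have haxis := hasDerivAt_slant_helix_axis hT hN hB hθ hm hpos hτ
  have hτ0 : ∀ s, s ≠ 0 → τ s ≠ 0 := fun s hs => by
    rw [hτ s]
    exact div_ne_zero (mul_ne_zero (mul_ne_zero hm (hκpos s).ne')
      (intervalIntegral_ne_zero_of_pos hκc hκpos hs.symm)) (Real.sqrt_pos.2 (hpos s)).ne'
  have hTN : ∀ s, ⟪N s, T s⟫ = 0 := fun s => by
    rw [real_inner_comm]
    exact inner_eq_zero_of_norm_eq_of_hasDerivAt_smul hTn (hT s) (hκpos s).ne'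
  have hNB := inner_normal_binormal_eq_zero hN hB hBn hτ0
  refine ⟨fun s₁ s₂ => ?_, fun s => ?_⟩
  · rw [is_const_of_deriv_eq_zero (fun s => (haxis s).differentiableAt)
      (fun s => (haxis s).deriv) s₁ s₂]
  · simp only [real_inner_smul_right, inner_add_right, hTN, hNB, real_inner_self_eq_norm_sq, hNn]
    ring

/-- Conversely, if τ = m κ θ / √(1 - m²θ²) with θ = ∫₀ˢ κ, |mθ| < 1,
m ≠ 0 and n = m/√(1+m²), then d = n (θ T + N + (1/m)√(1-m²θ²) B) is a constant
vector along the curve and ⟨N, d⟩ = n, so ψ is a slant helix. -/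
theorem slant_helix_converse
    (ψ T N B : ℝ → EuclideanSpace ℝ (Fin 3)) (κ τ : ℝ → ℝ) (n m : ℝ)
    (hκpos : ∀ s, 0 < κ s) (hκc : Continuous κ)
    (hψ : ∀ s, HasDerivAt ψ (T s) s)
    (hT : ∀ s, HasDerivAt T (κ s • N s) s)
    (hN : ∀ s, HasDerivAt N (-(κ s) • T s + τ s • B s) s)
    (hB : ∀ s, HasDerivAt B (-(τ s) • N s) s)
    (hTn : ∀ s, ‖T s‖ = 1) (hNn : ∀ s, ‖N s‖ = 1) (hBn : ∀ s, ‖B s‖ = 1)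
    (hm : m ≠ 0) (hn : n = m / Real.sqrt (1 + m ^ 2))
    (hsmall : ∀ s, |m * (∫ u in (0:ℝ)..s, κ u)| < 1)
    (hτ : ∀ s, τ s = m * κ s * (∫ u in (0:ℝ)..s, κ u) /
        Real.sqrt (1 - m ^ 2 * (∫ u in (0:ℝ)..s, κ u) ^ 2)) :
    (∀ s₁ s₂,
      n • ((∫ u in (0:ℝ)..s₁, κ u) • T s₁ + N s₁ +
          (m⁻¹ * Real.sqrt (1 - m ^ 2 * (∫ u in (0:ℝ)..s₁, κ u) ^ 2)) • B s₁)
      =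
      n • ((∫ u in (0:ℝ)..s₂, κ u) • T s₂ + N s₂ +
          (m⁻¹ * Real.sqrt (1 - m ^ 2 * (∫ u in (0:ℝ)..s₂, κ u) ^ 2)) • B s₂)) ∧
    (∀ s, ⟪N s,
      n • ((∫ u in (0:ℝ)..s, κ u) • T s + N s +
          (m⁻¹ * Real.sqrt (1 - m ^ 2 * (∫ u in (0:ℝ)..s, κ u) ^ 2)) • B s)⟫ = n) :=
  slant_helix_converse_general T N B κ τ n m hκpos hκc hT hN hB hTn hNn hBn hm hsmall hτ
end

section
/- Let n ∈ (0,1) and m = n/√(1-n²). If t : (-1/m, 1/m) → ℝ satisfies both m²θ·t'(θ) - (1-m²θ²)·t''(θ) = 0 and t'(θ) - 3m²θ·t''(θ) - (1-m²θ²)·(t'(θ)³ - t'''(θ)) = 0, with t' not identically zero, then t(θ) = c₂ + c₁·arcsin(mθ) for constants c₁, c₂ with c₁² = 1/n², i.e. c₁ = ±1/n. -/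
open Real Set Filter Topology

/-!
The first equation says exactly that `t' · √(1 - m²θ²)` has zero derivative, so
`t' = K / √(1 - m²θ²)` for a constant `K`, which integrates to `t = t 0 + (K / m) arcsin (mθ)`;
`K ≠ 0` because `t'` does not vanish identically. The second equation only pins down `K`: at
`θ = 0` it reads `K - K³ + t'''(0) = 0`, and differentiating the first equation at `0` gives
`t'''(0) = m² K`, whence `K² = 1 + m² = 1 / (1 - n²)` and `(K / m)² = 1 / n²`.
-/

lemma one_sub_sq_mul_sq_pos {m θ : ℝ} (hm : 0 < m) (hθ : θ ∈ Ioo (-(1 / m)) (1 / m)) :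
    0 < 1 - m ^ 2 * θ ^ 2 := by
  obtain ⟨h₁, h₂⟩ := hθ
  have hlt : m * θ < 1 := by rwa [lt_div_iff₀' hm] at h₂
  have hgt : -1 < m * θ := by rw [neg_lt, lt_div_iff₀' hm, mul_neg] at h₁; linarith
  nlinarith

lemma hasDerivAt_one_sub_sq_mul_sq (m θ : ℝ) :
    HasDerivAt (fun x => 1 - m ^ 2 * x ^ 2) (-(m ^ 2 * (2 * θ))) θ := by
  simpa using ((hasDerivAt_pow 2 θ).const_mul (m ^ 2)).const_sub 1

lemma hasDerivAt_mul_sqrt_one_sub_sq_of_ode {m θ f' : ℝ} {f : ℝ → ℝ} (hf : HasDerivAt f f' θ)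
    (hθ : 0 < 1 - m ^ 2 * θ ^ 2) (hode : m ^ 2 * θ * f θ - (1 - m ^ 2 * θ ^ 2) * f' = 0) :
    HasDerivAt (fun x => f x * √(1 - m ^ 2 * x ^ 2)) 0 θ := by
  refine (hf.mul ((hasDerivAt_one_sub_sq_mul_sq m θ).sqrt hθ.ne')).congr_deriv ?_
  have hsq := mul_self_sqrt hθ.le
  field_simp
  linear_combination -hode + f' * hsq

lemma hasDerivAt_arcsin_const_mul {m θ : ℝ} (hθ : 0 < 1 - m ^ 2 * θ ^ 2) :
    HasDerivAt (fun x => arcsin (m * x)) (m / √(1 - m ^ 2 * θ ^ 2)) θ := by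
  have h₁ : m * θ ≠ -1 := fun h => by nlinarith
  have h₂ : m * θ ≠ 1 := fun h => by nlinarith
  refine ((hasDerivAt_arcsin h₁ h₂).comp θ ((hasDerivAt_id θ).const_mul m)).congr_deriv ?_
  rw [mul_pow, mul_one, one_div_mul_eq_div]

lemma deriv_deriv_zero_eq_of_ode {m : ℝ} {f : ℝ → ℝ}
    (hf : DifferentiableAt ℝ f 0) (hf' : DifferentiableAt ℝ (deriv f) 0)
    (hode : ∀ᶠ θ in 𝓝 0, m ^ 2 * θ * f θ - (1 - m ^ 2 * θ ^ 2) * deriv f θ = 0) :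
    deriv (deriv f) 0 = m ^ 2 * f 0 := by
  have hF := (((hasDerivAt_id (0 : ℝ)).const_mul (m ^ 2)).mul hf.hasDerivAt).sub
    ((hasDerivAt_one_sub_sq_mul_sq m 0).mul hf'.hasDerivAt)
  have hF₀ := (hasDerivAt_const (0 : ℝ) (0 : ℝ)).congr_of_eventuallyEq hode
  have := hF.unique hF₀
  simp only [id, mul_zero, zero_mul, add_zero, mul_one] at this
  linear_combination -this

lemma mul_sqrt_one_sub_sq_eq_of_ode {m : ℝ} {f : ℝ → ℝ} (hm : 0 < m)
    (hf : DifferentiableOn ℝ f (Ioo (-(1 / m)) (1 / m)))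
    (hode : ∀ θ ∈ Ioo (-(1 / m)) (1 / m),
      m ^ 2 * θ * f θ - (1 - m ^ 2 * θ ^ 2) * deriv f θ = 0) :
    ∀ θ ∈ Ioo (-(1 / m)) (1 / m), f θ * √(1 - m ^ 2 * θ ^ 2) = f 0 := by
  have h₀ : (0 : ℝ) ∈ Ioo (-(1 / m)) (1 / m) := by simp [hm]
  have hderiv : ∀ θ ∈ Ioo (-(1 / m)) (1 / m),
      HasDerivAt (fun x => f x * √(1 - m ^ 2 * x ^ 2)) 0 θ := fun θ hθ =>
    hasDerivAt_mul_sqrt_one_sub_sq_of_ode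
      ((hf θ hθ).differentiableAt (isOpen_Ioo.mem_nhds hθ)).hasDerivAt
      (one_sub_sq_mul_sq_pos hm hθ) (hode θ hθ)
  intro θ hθ
  simpa using isOpen_Ioo.is_const_of_deriv_eq_zero isPreconnected_Ioo
    (fun x hx => (hderiv x hx).differentiableAt.differentiableWithinAt)
    (fun x hx => (hderiv x hx).deriv) hθ h₀

lemma eqOn_add_mul_arcsin {m K : ℝ} {t : ℝ → ℝ} (hm : 0 < m)
    (ht : DifferentiableOn ℝ t (Ioo (-(1 / m)) (1 / m)))
    (hK : ∀ θ ∈ Ioo (-(1 / m)) (1 / m), deriv t θ * √(1 - m ^ 2 * θ ^ 2) = K) :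
    ∀ θ ∈ Ioo (-(1 / m)) (1 / m), t θ = t 0 + K / m * arcsin (m * θ) := by
  have h₀ : (0 : ℝ) ∈ Ioo (-(1 / m)) (1 / m) := by simp [hm]
  have harcsin : ∀ θ ∈ Ioo (-(1 / m)) (1 / m), HasDerivAt (fun x => t 0 + K / m * arcsin (m * x))
      (K / √(1 - m ^ 2 * θ ^ 2)) θ := fun θ hθ => by
    refine (((hasDerivAt_arcsin_const_mul (one_sub_sq_mul_sq_pos hm hθ)).const_mul
      (K / m)).const_add (t 0)).congr_deriv ?_
    field_simp
  refine fun θ hθ => isOpen_Ioo.eqOn_of_deriv_eq isPreconnected_Ioo ht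
    (fun x hx => (harcsin x hx).differentiableAt.differentiableWithinAt)
    (fun x hx => ?_) h₀ (by simp) hθ
  rw [(harcsin x hx).deriv, ← hK x hx,
    mul_div_cancel_right₀ _ (sqrt_pos.2 (one_sub_sq_mul_sq_pos hm hx)).ne']

lemma one_add_sq_div_sq_of_eq_div_sqrt {n m : ℝ} (hn : n ∈ Ioo (0 : ℝ) 1)
    (hm : m = n / √(1 - n ^ 2)) : (1 + m ^ 2) / m ^ 2 = 1 / n ^ 2 := by
  have hn₂ : 0 < 1 - n ^ 2 := by nlinarith [hn.1, hn.2]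
  rw [hm, div_pow, sq_sqrt hn₂.le]
  field_simp [hn.1.ne', hn₂.ne']
  ring

/-- If t is C³ on (-1/m, 1/m) and satisfies both
m²θ t' - (1-m²θ²) t'' = 0 and t' - 3m²θ t'' - (1-m²θ²)(t'³ - t''') = 0,
with t' not identically zero, then t(θ) = c₂ + c₁ arcsin(mθ) with c₁² = 1/n². -/
theorem solution_of_t_odes (n m : ℝ) (hn : n ∈ Set.Ioo (0:ℝ) 1)
    (hm : m = n / Real.sqrt (1 - n ^ 2))
    (t : ℝ → ℝ)
    (ht : ContDiffOn ℝ 3 t (Set.Ioo (-(1/m)) (1/m)))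
    (hode1 : ∀ θ ∈ Set.Ioo (-(1/m)) (1/m),
      m ^ 2 * θ * deriv t θ - (1 - m ^ 2 * θ ^ 2) * deriv (deriv t) θ = 0)
    (hode2 : ∀ θ ∈ Set.Ioo (-(1/m)) (1/m),
      deriv t θ - 3 * m ^ 2 * θ * deriv (deriv t) θ
        - (1 - m ^ 2 * θ ^ 2) * ((deriv t θ) ^ 3 - deriv (deriv (deriv t)) θ) = 0)
    (hnz : ∃ θ ∈ Set.Ioo (-(1/m)) (1/m), deriv t θ ≠ 0) :
    ∃ c₁ c₂ : ℝ, c₁ ^ 2 = 1 / n ^ 2 ∧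
      ∀ θ ∈ Set.Ioo (-(1/m)) (1/m), t θ = c₂ + c₁ * Real.arcsin (m * θ) := by
  have hm₀ : 0 < m := hm ▸ div_pos hn.1 (sqrt_pos.2 (by nlinarith [hn.1, hn.2]))
  have h₀ : Ioo (-(1 / m)) (1 / m) ∈ 𝓝 (0 : ℝ) := isOpen_Ioo.mem_nhds (by simp [hm₀])
  have ht' : ContDiffOn ℝ 2 (deriv t) (Ioo (-(1 / m)) (1 / m)) :=
    ht.deriv_of_isOpen isOpen_Ioo (by norm_num)
  have ht'' : ContDiffOn ℝ 1 (deriv (deriv t)) (Ioo (-(1 / m)) (1 / m)) :=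
    ht'.deriv_of_isOpen isOpen_Ioo (by norm_num)
  have hK := mul_sqrt_one_sub_sq_eq_of_ode hm₀ (ht'.differentiableOn (by norm_num)) hode1
  have hK₀ : deriv t 0 ≠ 0 := by
    obtain ⟨θ, hθ, hne⟩ := hnz
    rw [← hK θ hθ]
    exact mul_ne_zero hne (sqrt_pos.2 (one_sub_sq_mul_sq_pos hm₀ hθ)).ne'
  have h₃ := deriv_deriv_zero_eq_of_ode
    ((ht'.differentiableOn (by norm_num)).differentiableAt h₀)
    ((ht''.differentiableOn one_ne_zero).differentiableAt h₀) (eventually_of_mem h₀ hode1)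
  have hK₂ : deriv t 0 ^ 2 = 1 + m ^ 2 := by
    have h := hode2 0 (mem_of_mem_nhds h₀)
    rw [h₃] at h
    exact mul_left_cancel₀ hK₀ (by linear_combination -h)
  refine ⟨deriv t 0 / m, t 0, ?_, eqOn_add_mul_arcsin hm₀ (ht.differentiableOn (by norm_num)) hK⟩
  rw [div_pow, hK₂, one_add_sq_div_sq_of_eq_div_sqrt hn hm]
end

section
/- For n ∈ (0,1), m = n/√(1-n²), the anti-Salkowski curve ψ(t) = ( (n/(4m))·[((n-1)/(2n+1))·sin((2n+1)t) + ((n+1)/(2n-1))·sin((2n-1)t) - 2n·sin t], (n/(4m))·[((1-n)/(1+2n))·cos((1+2n)t) - ((1+n)/(1-2n))·cos((1-2n)t) + 2n·cos t], (n/(4m²))·(2nt - sin(2nt)) ) has torsion identically 1 and curvature κ(t) = cot(nt) on intervals where sin(nt), cos(nt) > 0. -/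
/-!
Write the derivatives of `ψ` in the frame rotating with angle `t` about the `z`-axis: if `R t` is
that rotation, then `(R t p)' = R t (p' + e₃ × p)`, and in this frame the components of `ψ'`,
`ψ''`, `ψ'''` are polynomials in `s = √(1 - n²) = n / m`, `sin (n t)` and `cos (n t)` alone.
There `ψ' = s sin(nt) • T` and `ψ' × ψ'' = s³ sin²(nt) cos(nt) • B` with unit vectors `T`, `B`,
and `⟪B, ψ'''⟫ = s³ sin²(nt) cos(nt)`. Since `R t` preserves cross products, norms and inner
products, `κ = s³ sin²(nt) cos(nt) / (s sin(nt))³ = cot(nt)` and `τ = 1`.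
-/

open Real
open scoped RealInnerProductSpace

noncomputable def cross3 (a b : EuclideanSpace ℝ (Fin 3)) : EuclideanSpace ℝ (Fin 3) :=
  (WithLp.equiv 2 (Fin 3 → ℝ)).symm
    ![a 1 * b 2 - a 2 * b 1, a 2 * b 0 - a 0 * b 2, a 0 * b 1 - a 1 * b 0]

local notation "ℝ³" => EuclideanSpace ℝ (Fin 3)

theorem hasDerivAt_vec3 {f g h : ℝ → ℝ} {f' g' h' t : ℝ} (hf : HasDerivAt f f' t)
    (hg : HasDerivAt g g' t) (hh : HasDerivAt h h' t) :
    HasDerivAt (fun x => !₂[f x, g x, h x]) !₂[f', g', h'] t := by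
  have hpi : HasDerivAt (fun x => ![f x, g x, h x]) ![f', g', h'] t := by
    rw [hasDerivAt_pi]
    intro i
    fin_cases i <;> simpa
  exact (PiLp.hasFDerivAt_toLp 2 _).comp_hasDerivAt t hpi

theorem inner_eq_sum_three (x y : ℝ³) : ⟪x, y⟫ = x 0 * y 0 + x 1 * y 1 + x 2 * y 2 := by
  simp only [PiLp.inner_apply, Fin.sum_univ_three, RCLike.inner_apply, conj_trivial]
  ring

theorem hasDerivAt_div_mul_sin (a : ℝ) {k : ℝ} (hk : k ≠ 0) (t : ℝ) :
    HasDerivAt (fun t => a / k * sin (k * t)) (a * cos (k * t)) t := by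
  refine (((hasDerivAt_id t).const_mul k).sin.const_mul (a / k)).congr_deriv ?_
  field_simp
  rfl

theorem hasDerivAt_div_mul_cos (a : ℝ) {k : ℝ} (hk : k ≠ 0) (t : ℝ) :
    HasDerivAt (fun t => a / k * cos (k * t)) (-(a * sin (k * t))) t := by
  refine (((hasDerivAt_id t).const_mul k).cos.const_mul (a / k)).congr_deriv ?_
  field_simp
  rfl

noncomputable def rotZ (t : ℝ) (x : ℝ³) : ℝ³ :=
  !₂[x 0 * cos t - x 1 * sin t, x 0 * sin t + x 1 * cos t, x 2]

theorem inner_rotZ (t : ℝ) (x y : ℝ³) : ⟪rotZ t x, rotZ t y⟫ = ⟪x, y⟫ := by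
  simp only [inner_eq_sum_three, rotZ, Matrix.cons_val_zero, Matrix.cons_val_one, Matrix.cons_val]
  linear_combination (x 0 * y 0 + x 1 * y 1) * sin_sq_add_cos_sq t

theorem norm_rotZ (t : ℝ) (x : ℝ³) : ‖rotZ t x‖ = ‖x‖ := by
  rw [norm_eq_sqrt_real_inner, norm_eq_sqrt_real_inner, inner_rotZ]

theorem cross3_rotZ (t : ℝ) (x y : ℝ³) : cross3 (rotZ t x) (rotZ t y) = rotZ t (cross3 x y) := by
  ext i
  fin_cases i <;> simp only [cross3, rotZ, WithLp.equiv_symm_apply, Matrix.cons_val_zero,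
    Matrix.cons_val_one, Matrix.cons_val, Fin.zero_eta, Fin.mk_one, Fin.reduceFinMk]
  · ring
  · ring
  · linear_combination (x 0 * y 1 - x 1 * y 0) * sin_sq_add_cos_sq t

theorem hasDerivAt_rotZ_vec3 {a b c : ℝ → ℝ} {a' b' c' t : ℝ} (ha : HasDerivAt a a' t)
    (hb : HasDerivAt b b' t) (hc : HasDerivAt c c' t) :
    HasDerivAt (fun t => rotZ t !₂[a t, b t, c t]) (rotZ t !₂[a' - b t, b' + a t, c']) t := by
  refine (hasDerivAt_vec3 ((ha.mul (hasDerivAt_cos t)).sub (hb.mul (hasDerivAt_sin t)))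
    ((ha.mul (hasDerivAt_sin t)).add (hb.mul (hasDerivAt_cos t))) hc).congr_deriv ?_
  simp only [rotZ, mul_neg, Matrix.cons_val_zero, Matrix.cons_val_one, Matrix.cons_val,
    WithLp.toLp.injEq, Matrix.vecCons_inj, and_true]
  constructor <;> ring

namespace AntiSalkowski

theorem hasDerivAt_curve_z (n t : ℝ) :
    HasDerivAt (fun t => 2 * n * t - sin (2 * n * t)) (4 * n * sin (n * t) ^ 2) t := by
  refine (((hasDerivAt_id t).const_mul (2 * n)).sub
    ((hasDerivAt_id t).const_mul (2 * n)).sin).congr_deriv ?_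
  simp only [id, mul_one]
  rw [mul_assoc, cos_two_mul]
  linear_combination (-4 * n) * sin_sq_add_cos_sq (n * t)

variable {n : ℝ}

theorem hasDerivAt_curve_x (h₁ : 2 * n + 1 ≠ 0) (h₂ : 2 * n - 1 ≠ 0) (t : ℝ) :
    HasDerivAt (fun t => (n - 1) / (2 * n + 1) * sin ((2 * n + 1) * t)
        + (n + 1) / (2 * n - 1) * sin ((2 * n - 1) * t) - 2 * n * sin t)
      (4 * sin (n * t) * (cos (n * t) * sin t - n * sin (n * t) * cos t)) t := by
  refine ((hasDerivAt_div_mul_sin _ h₁ t).add (hasDerivAt_div_mul_sin _ h₂ t) |>.sub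
    ((hasDerivAt_sin t).const_mul (2 * n))).congr_deriv ?_
  rw [show (2 * n + 1) * t = 2 * (n * t) + t by ring,
    show (2 * n - 1) * t = 2 * (n * t) - t by ring]
  simp only [cos_add, cos_sub, cos_two_mul, sin_two_mul]
  linear_combination (4 * n * cos t) * sin_sq_add_cos_sq (n * t)

theorem hasDerivAt_curve_y (h₁ : 1 + 2 * n ≠ 0) (h₂ : 1 - 2 * n ≠ 0) (t : ℝ) :
    HasDerivAt (fun t => (1 - n) / (1 + 2 * n) * cos ((1 + 2 * n) * t)
        - (1 + n) / (1 - 2 * n) * cos ((1 - 2 * n) * t) + 2 * n * cos t)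
      (-4 * sin (n * t) * (n * sin (n * t) * sin t + cos (n * t) * cos t)) t := by
  refine ((hasDerivAt_div_mul_cos _ h₁ t).sub (hasDerivAt_div_mul_cos _ h₂ t) |>.add
    ((hasDerivAt_cos t).const_mul (2 * n))).congr_deriv ?_
  rw [show (1 + 2 * n) * t = t + 2 * (n * t) by ring,
    show (1 - 2 * n) * t = t - 2 * (n * t) by ring]
  simp only [sin_add, sin_sub, cos_two_mul, sin_two_mul]
  linear_combination (4 * n * sin t) * sin_sq_add_cos_sq (n * t)

variable (n) (s : ℝ)

noncomputable def curve (m t : ℝ) : ℝ³ :=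
  !₂[(n/(4*m)) * ((n-1)/(2*n+1) * Real.sin ((2*n+1)*t)
      + (n+1)/(2*n-1) * Real.sin ((2*n-1)*t) - 2*n * Real.sin t),
    (n/(4*m)) * ((1-n)/(1+2*n) * Real.cos ((1+2*n)*t)
      - (1+n)/(1-2*n) * Real.cos ((1-2*n)*t) + 2*n * Real.cos t),
    (n/(4*m^2)) * (2*n*t - Real.sin (2*n*t))]

/- Components of `ψ'`, `ψ''`, `ψ'''` and of the binormal in the frame rotated by `rotZ t`,
with `s` standing for `√(1 - n²)`. -/

noncomputable def vel (t : ℝ) : ℝ³ :=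
  !₂[-(n * s * sin (n * t) ^ 2), -(s * sin (n * t) * cos (n * t)), s ^ 2 * sin (n * t) ^ 2]

noncomputable def acc (t : ℝ) : ℝ³ :=
  !₂[(1 - 2 * n ^ 2) * s * sin (n * t) * cos (n * t), -(n * s * cos (n * t) ^ 2),
    2 * n * s ^ 2 * sin (n * t) * cos (n * t)]

noncomputable def jerk (t : ℝ) : ℝ³ :=
  !₂[n * s * ((1 - 2 * n ^ 2) * (cos (n * t) ^ 2 - sin (n * t) ^ 2) + cos (n * t) ^ 2),
    s * sin (n * t) * cos (n * t), 2 * n ^ 2 * s ^ 2 * (cos (n * t) ^ 2 - sin (n * t) ^ 2)]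

noncomputable def binormal (t : ℝ) : ℝ³ :=
  !₂[-(n * cos (n * t)), sin (n * t), s * cos (n * t)]

theorem hasDerivAt_rotZ_vel (t : ℝ) :
    HasDerivAt (fun t => rotZ t (vel n s t)) (rotZ t (acc n s t)) t := by
  have hS := ((hasDerivAt_id t).const_mul n).sin
  have hC := ((hasDerivAt_id t).const_mul n).cos
  convert hasDerivAt_rotZ_vec3 ((hS.pow 2).const_mul (n * s)).neg ((hS.const_mul s).mul hC).neg
    ((hS.pow 2).const_mul (s ^ 2)) using 1
  · funext x
    simp only [vel, id, Pi.neg_apply, Pi.mul_apply, Pi.pow_apply]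
  · simp only [acc, id, Pi.neg_apply, Pi.mul_apply, Pi.pow_apply]
    congr 2
    simp only [Matrix.vecCons_inj, and_true]
    refine ⟨?_, ?_, ?_⟩ <;> ring

theorem hasDerivAt_rotZ_acc (t : ℝ) :
    HasDerivAt (fun t => rotZ t (acc n s t)) (rotZ t (jerk n s t)) t := by
  have hS := ((hasDerivAt_id t).const_mul n).sin
  have hC := ((hasDerivAt_id t).const_mul n).cos
  convert hasDerivAt_rotZ_vec3 ((hS.const_mul ((1 - 2 * n ^ 2) * s)).mul hC)
    ((hC.pow 2).const_mul (n * s)).neg ((hS.const_mul (2 * n * s ^ 2)).mul hC) using 1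
  · funext x
    simp only [acc, id, Pi.neg_apply, Pi.mul_apply, Pi.pow_apply]
  · simp only [jerk, id, Pi.neg_apply, Pi.mul_apply, Pi.pow_apply]
    congr 2
    simp only [Matrix.vecCons_inj, and_true]
    refine ⟨?_, ?_, ?_⟩ <;> ring

variable {n s}

theorem hasDerivAt_curve {m : ℝ} (hn : n ≠ 0) (hs : s ≠ 0) (hm : m = n / s)
    (h₁ : 2 * n + 1 ≠ 0) (h₂ : 2 * n - 1 ≠ 0) (t : ℝ) :
    HasDerivAt (curve n m) (rotZ t (vel n s t)) t := by
  have hy₁ : 1 + 2 * n ≠ 0 := by rwa [add_comm]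
  have hy₂ : 1 - 2 * n ≠ 0 := by rw [← neg_sub]; exact neg_ne_zero.2 h₂
  refine (hasDerivAt_vec3 ((hasDerivAt_curve_x h₁ h₂ t).const_mul _)
    ((hasDerivAt_curve_y hy₁ hy₂ t).const_mul _)
    ((hasDerivAt_curve_z n t).const_mul _)).congr_deriv ?_
  subst hm
  simp only [rotZ, vel, neg_mul, mul_neg, Matrix.cons_val_zero, Matrix.cons_val_one, sub_neg_eq_add,
    Matrix.cons_val, WithLp.toLp.injEq, Matrix.vecCons_inj, and_true]
  refine ⟨?_, ?_, ?_⟩ <;> field_simp <;> ring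

theorem norm_vel (hs : s ^ 2 = 1 - n ^ 2) (t : ℝ) : ‖vel n s t‖ = |s * sin (n * t)| := by
  rw [norm_eq_sqrt_real_inner, inner_eq_sum_three, ← sqrt_sq_eq_abs]
  congr 1
  simp only [vel, Matrix.cons_val_zero, Matrix.cons_val_one, Matrix.cons_val]
  linear_combination (s ^ 2 * sin (n * t) ^ 2) * sin_sq_add_cos_sq (n * t)
    + (s ^ 2 * sin (n * t) ^ 4) * hs

theorem cross3_vel_acc (hs : s ^ 2 = 1 - n ^ 2) (t : ℝ) :
    cross3 (vel n s t) (acc n s t) = (s ^ 3 * sin (n * t) ^ 2 * cos (n * t)) • binormal n s t := by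
  ext i
  fin_cases i <;> simp only [cross3, vel, acc, binormal, WithLp.equiv_symm_apply, PiLp.smul_apply,
    smul_eq_mul, Matrix.cons_val_zero, Matrix.cons_val_one, Matrix.cons_val, Fin.zero_eta,
    Fin.mk_one, Fin.reduceFinMk]
  · ring
  · ring
  · linear_combination (-(s ^ 2 * sin (n * t) ^ 2 * cos (n * t) ^ 2)) * hs

theorem norm_binormal (hs : s ^ 2 = 1 - n ^ 2) (t : ℝ) : ‖binormal n s t‖ = 1 := by
  rw [norm_eq_sqrt_real_inner, inner_eq_sum_three, ← sqrt_one]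
  congr 1
  simp only [binormal, Matrix.cons_val_zero, Matrix.cons_val_one, Matrix.cons_val]
  linear_combination sin_sq_add_cos_sq (n * t) + cos (n * t) ^ 2 * hs

theorem inner_binormal_jerk (hs : s ^ 2 = 1 - n ^ 2) (t : ℝ) :
    ⟪binormal n s t, jerk n s t⟫ = s ^ 3 * sin (n * t) ^ 2 * cos (n * t) := by
  rw [inner_eq_sum_three]
  simp only [binormal, jerk, Matrix.cons_val_zero, Matrix.cons_val_one, Matrix.cons_val]
  linear_combination
    s * cos (n * t) * (2 * n ^ 2 * (cos (n * t) ^ 2 - sin (n * t) ^ 2) - sin (n * t) ^ 2) * hs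

end AntiSalkowski

open AntiSalkowski in
/-- The anti-Salkowski curve: explicit parametrization with τ ≡ 1 and
κ(t) = cot(nt) on intervals where sin(nt), cos(nt) > 0. -/
theorem anti_salkowski_curve (n m : ℝ) (hn : n ∈ Set.Ioo (0:ℝ) 1) (hn2 : n ≠ 1/2)
    (hm : m = n / Real.sqrt (1 - n ^ 2))
    (ψ : ℝ → EuclideanSpace ℝ (Fin 3))
    (hψ : ψ = fun t => (WithLp.equiv 2 (Fin 3 → ℝ)).symm
      ![(n/(4*m)) * ((n-1)/(2*n+1) * Real.sin ((2*n+1)*t)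
          + (n+1)/(2*n-1) * Real.sin ((2*n-1)*t) - 2*n * Real.sin t),
        (n/(4*m)) * ((1-n)/(1+2*n) * Real.cos ((1+2*n)*t)
          - (1+n)/(1-2*n) * Real.cos ((1-2*n)*t) + 2*n * Real.cos t),
        (n/(4*m^2)) * (2*n*t - Real.sin (2*n*t))]) :
    ∀ t : ℝ, 0 < Real.sin (n*t) → 0 < Real.cos (n*t) →
      ⟪cross3 (deriv ψ t) (deriv (deriv ψ) t), deriv (deriv (deriv ψ)) t⟫ /
          ‖cross3 (deriv ψ t) (deriv (deriv ψ) t)‖ ^ 2 = 1 ∧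
      ‖cross3 (deriv ψ t) (deriv (deriv ψ) t)‖ / ‖deriv ψ t‖ ^ 3
        = Real.cos (n*t) / Real.sin (n*t) := by
  obtain ⟨hn0, hn1⟩ := hn
  set s := √(1 - n ^ 2)
  have hs2 : s ^ 2 = 1 - n ^ 2 := sq_sqrt (by nlinarith)
  have hs : 0 < s := sqrt_pos.2 (by nlinarith)
  have hd₁ : deriv ψ = fun t => rotZ t (vel n s t) := by
    rw [show ψ = curve n m from hψ]
    exact funext fun t =>
      (hasDerivAt_curve hn0.ne' hs.ne' hm (by linarith) (by contrapose! hn2; linarith) t).deriv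
  have hd₂ : deriv (deriv ψ) = fun t => rotZ t (acc n s t) :=
    hd₁ ▸ funext fun t => (hasDerivAt_rotZ_vel n s t).deriv
  have hd₃ : deriv (deriv (deriv ψ)) = fun t => rotZ t (jerk n s t) :=
    hd₂ ▸ funext fun t => (hasDerivAt_rotZ_acc n s t).deriv
  intro t hsin hcos
  have hk : 0 < s ^ 3 * sin (n * t) ^ 2 * cos (n * t) := by positivity
  rw [hd₃, hd₂, hd₁]
  simp only [cross3_rotZ, norm_rotZ, inner_rotZ, cross3_vel_acc hs2, norm_smul, inner_smul_left,
    conj_trivial, norm_binormal hs2, inner_binormal_jerk hs2, norm_vel hs2, Real.norm_eq_abs,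
    abs_of_pos hk, abs_of_pos (mul_pos hs hsin)]
  constructor
  · field_simp
  · field_simp
end

section
/- Let ψ be a unit speed curve in ℝ³ with κ > 0 whose principal normal makes a constant angle arccos(n) with a fixed unit vector d, 0 < |n| < 1. Then ⟨T, d⟩ = f·⟨B, d⟩ where f = τ/κ, and d = ±f·√((1-n²)/(1+f²))·T + n·N ± √((1-n²)/(1+f²))·B. -/
open Real
open scoped RealInnerProductSpace

/-! Differentiating `⟪N, d⟫ = n` with `N' = -κ T + τ B` gives `κ ⟪T, d⟫ = τ ⟪B, d⟫`. Expanding the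
unit vector `d` in the Frenet frame then gives `(1 + f²) ⟪B, d⟫² = 1 - n² > 0`, so the continuous
function `⟪B, d⟫` never vanishes and hence has a constant sign `ε` on `ℝ`. -/

section Frame

variable {E : Type*} [NormedAddCommGroup E] [InnerProductSpace ℝ E]

theorem orthonormal_three {u v w : E} (hu : ‖u‖ = 1) (hv : ‖v‖ = 1) (hw : ‖w‖ = 1)
    (huv : ⟪u, v⟫ = 0) (huw : ⟪u, w⟫ = 0) (hvw : ⟪v, w⟫ = 0) :
    Orthonormal ℝ ![u, v, w] := by
  simp [orthonormal_vecCons_iff, Fin.forall_fin_succ, hu, hv, hw, huv, huw, hvw]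

variable {ι : Type*} [Fintype ι] [Nonempty ι] {v : ι → E}

theorem Orthonormal.sum_inner_smul_eq (hv : Orthonormal ℝ v)
    (hcard : Fintype.card ι = Module.finrank ℝ E) (x : E) : ∑ i, ⟪v i, x⟫ • v i = x := by
  have hspan := (hv.linearIndependent.span_eq_top_of_card_eq_finrank hcard).ge
  simpa [OrthonormalBasis.coe_mk] using (OrthonormalBasis.mk hv hspan).sum_repr' x

theorem Orthonormal.sum_sq_inner_eq (hv : Orthonormal ℝ v)
    (hcard : Fintype.card ι = Module.finrank ℝ E) (x : E) : ∑ i, ⟪v i, x⟫ ^ 2 = ‖x‖ ^ 2 := by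
  have hspan := (hv.linearIndependent.span_eq_top_of_card_eq_finrank hcard).ge
  simpa [OrthonormalBasis.coe_mk] using (OrthonormalBasis.mk hv hspan).sum_sq_norm_inner_right x

end Frame

theorem inner_eq_zero_of_hasDerivAt_of_inner_const {E : Type*} [NormedAddCommGroup E]
    [InnerProductSpace ℝ E] {F : ℝ → E} {F' d : E} {c s : ℝ} (hF : HasDerivAt F F' s)
    (hc : ∀ t, ⟪F t, d⟫ = c) : ⟪F', d⟫ = 0 := by
  have hconst : HasDerivAt (fun t => ⟪F t, d⟫) 0 s := by
    simpa only [hc] using hasDerivAt_const s c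
  simpa using (hF.inner ℝ (hasDerivAt_const s d)).unique hconst

theorem Continuous.exists_sign_mul_abs_eq {α : Type*} [TopologicalSpace α] [PreconnectedSpace α]
    {g : α → ℝ} (hg : Continuous g) (hne : ∀ x, g x ≠ 0) :
    ∃ ε : ℝ, (ε = 1 ∨ ε = -1) ∧ ∀ x, g x = ε * |g x| := by
  rcases isPreconnected_univ.eq_or_eq_neg_of_sq_eq hg.continuousOn hg.abs.continuousOn
      (fun x _ => by simp [sq_abs]) (fun _ => abs_ne_zero.2 (hne _)) with h | h
  · exact ⟨1, .inl rfl, fun x => by simpa using h (Set.mem_univ x)⟩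
  · exact ⟨-1, .inr rfl, fun x => by simpa using h (Set.mem_univ x)⟩

theorem slant_helix_axis_decomposition_general
    (T N B : ℝ → EuclideanSpace ℝ (Fin 3)) (κ τ f : ℝ → ℝ)
    (d : EuclideanSpace ℝ (Fin 3)) (n : ℝ)
    (hκpos : ∀ s, 0 < κ s)
    (hN : ∀ s, HasDerivAt N (-(κ s) • T s + τ s • B s) s)
    (hTn : ∀ s, ‖T s‖ = 1) (hNn : ∀ s, ‖N s‖ = 1) (hBn : ∀ s, ‖B s‖ = 1)
    (hTN : ∀ s, ⟪T s, N s⟫ = 0) (hTB : ∀ s, ⟪T s, B s⟫ = 0)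
    (hNB : ∀ s, ⟪N s, B s⟫ = 0)
    (hd : ‖d‖ = 1) (hn1 : |n| < 1)
    (hangle : ∀ s, ⟪N s, d⟫ = n)
    (hf : f = fun s => τ s / κ s)
    (hBc : Continuous B) :
    (∀ s, ⟪T s, d⟫ = f s * ⟪B s, d⟫) ∧
    ∃ ε : ℝ, (ε = 1 ∨ ε = -1) ∧ ∀ s,
      d = (ε * (f s * Real.sqrt ((1 - n ^ 2) / (1 + f s ^ 2)))) • T s + n • N s +
          (ε * Real.sqrt ((1 - n ^ 2) / (1 + f s ^ 2))) • B s := by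
  have hframe (s : ℝ) : Orthonormal ℝ ![T s, N s, B s] :=
    orthonormal_three (hTn s) (hNn s) (hBn s) (hTN s) (hTB s) (hNB s)
  have hcard : Fintype.card (Fin 3) = Module.finrank ℝ (EuclideanSpace ℝ (Fin 3)) := by simp
  have hTd (s : ℝ) : ⟪T s, d⟫ = f s * ⟪B s, d⟫ := by
    have h := inner_eq_zero_of_hasDerivAt_of_inner_const (hN s) hangle
    rw [inner_add_left, real_inner_smul_left, real_inner_smul_left] at h
    rw [hf, div_mul_eq_mul_div, eq_div_iff (hκpos s).ne']
    linarith
  have hBd_sq (s : ℝ) : ⟪B s, d⟫ ^ 2 = (1 - n ^ 2) / (1 + f s ^ 2) := by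
    have h := (hframe s).sum_sq_inner_eq hcard d
    simp only [Fin.sum_univ_three, Matrix.cons_val, hd, hangle, hTd] at h
    rw [eq_div_iff (by positivity)]
    linear_combination h
  have hn_sq : 0 < 1 - n ^ 2 := by nlinarith [sq_abs n, abs_nonneg n]
  have hBd_ne (s : ℝ) : ⟪B s, d⟫ ≠ 0 := fun h0 =>
    (div_pos hn_sq (by positivity : (0 : ℝ) < 1 + f s ^ 2)).ne' (by rw [← hBd_sq s, h0]; ring)
  obtain ⟨ε, hε, hsign⟩ := (hBc.inner continuous_const).exists_sign_mul_abs_eq hBd_ne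
  refine ⟨hTd, ε, hε, fun s => ?_⟩
  have hBd : ⟪B s, d⟫ = ε * √((1 - n ^ 2) / (1 + f s ^ 2)) := by
    rw [hsign s, ← Real.sqrt_sq_eq_abs, hBd_sq s]
  have hdecomp := (hframe s).sum_inner_smul_eq hcard d
  simp only [Fin.sum_univ_three, Matrix.cons_val, hangle, hTd, hBd] at hdecomp
  rw [← hdecomp, mul_left_comm]

/-- For a slant helix with ⟨N, d⟩ = n (d a fixed unit vector,
0 < |n| < 1), one has ⟨T, d⟩ = f ⟨B, d⟩ with f = τ/κ, and
d = ε f √((1-n²)/(1+f²)) T + n N + ε √((1-n²)/(1+f²)) B for a sign ε = ±1. -/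
theorem slant_helix_axis_decomposition
    (ψ T N B : ℝ → EuclideanSpace ℝ (Fin 3)) (κ τ f : ℝ → ℝ)
    (d : EuclideanSpace ℝ (Fin 3)) (n : ℝ)
    (hκpos : ∀ s, 0 < κ s)
    (hψ : ∀ s, HasDerivAt ψ (T s) s)
    (hT : ∀ s, HasDerivAt T (κ s • N s) s)
    (hN : ∀ s, HasDerivAt N (-(κ s) • T s + τ s • B s) s)
    (hB : ∀ s, HasDerivAt B (-(τ s) • N s) s)
    (hTn : ∀ s, ‖T s‖ = 1) (hNn : ∀ s, ‖N s‖ = 1) (hBn : ∀ s, ‖B s‖ = 1)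
    (hTN : ∀ s, ⟪T s, N s⟫ = 0) (hTB : ∀ s, ⟪T s, B s⟫ = 0)
    (hNB : ∀ s, ⟪N s, B s⟫ = 0)
    (hd : ‖d‖ = 1) (hn0 : 0 < |n|) (hn1 : |n| < 1)
    (hangle : ∀ s, ⟪N s, d⟫ = n)
    (hf : f = fun s => τ s / κ s)
    (hκc : Continuous κ) (hτc : Continuous τ)
    (hBc : Continuous B) :
    (∀ s, ⟪T s, d⟫ = f s * ⟪B s, d⟫) ∧
    ∃ ε : ℝ, (ε = 1 ∨ ε = -1) ∧ ∀ s,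
      d = (ε * (f s * Real.sqrt ((1 - n ^ 2) / (1 + f s ^ 2)))) • T s + n • N s +
          (ε * Real.sqrt ((1 - n ^ 2) / (1 + f s ^ 2))) • B s :=
  slant_helix_axis_decomposition_general T N B κ τ f d n hκpos hN hTn hNn hBn hTN hTB hNB hd hn1
    hangle hf hBc
end
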